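/- arXiv:2512.04220 — 9 statements merged into one kernel-verified Lean document; each statement's English description precedes it below -/
import Mathlib

section
/- (Action-level lazy likelihood displacement formula.) Suppose W : ℝ → Matrix V (Fin d) ℝ follows the gradient flow associated with training examples (y_i, h_i)_{i ∈ I} and coefficients (c_i)_{i ∈ I}. Then for every target token y ∈ V and context feature h : Fin d → ℝ and every time s, the function s ↦ ln π_{W(s)}(y ∣ h) is differentiable at s with derivative ∑_{i ∈ I} c_i · ⟨δ_{W(s)}(y, h), δ_{W(s)}(y_i, h_i)⟩ · ⟨h, h_i⟩, where ⟨·,·⟩ denotes the Euclidean inner product on V-indexed (respectively Fin d-indexed) real vectors. -/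
open scoped BigOperators

/-- Softmax policy `π_W(v ∣ h)` for a log-linear model with weight matrix `W`. -/
noncomputable def pol {V : Type*} [Fintype V] {d : ℕ}
    (W : V → Fin d → ℝ) (h : Fin d → ℝ) (v : V) : ℝ :=
  Real.exp (∑ j, W v j * h j) / ∑ u, Real.exp (∑ j, W u j * h j)

/-- Prediction-error vector `δ_W(y, h)`. -/
noncomputable def pe {V : Type*} [Fintype V] [DecidableEq V] {d : ℕ}
    (W : V → Fin d → ℝ) (y : V) (h : Fin d → ℝ) (v : V) : ℝ :=
  (if v = y then 1 else 0) - pol W h v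

/-- Outer product `(a ⊗ h)(v, j) = a v * h j`. -/
def outer {V : Type*} {d : ℕ} (a : V → ℝ) (h : Fin d → ℝ) : V → Fin d → ℝ :=
  fun v j => a v * h j

/-- Euclidean inner product on `V`-indexed real vectors. -/
def dotV {V : Type*} [Fintype V] (a b : V → ℝ) : ℝ := ∑ v, a v * b v

/-- Euclidean inner product on `Fin d`-indexed real vectors. -/
def dotF {d : ℕ} (a b : Fin d → ℝ) : ℝ := ∑ j, a j * b j

/-- Action-level lazy likelihood displacement formula: along the gradient flow of the
weighted log-likelihood objective, the log-likelihood of any target token `(y₀, h₀)`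
evolves with derivative `∑ i c_i ⟨δ(y₀,h₀), δ(y_i,h_i)⟩ ⟨h₀, h_i⟩`. -/
theorem action_level_LLD {V I : Type*} [Fintype V] [DecidableEq V] [Nonempty V] [Fintype I]
    {d : ℕ} (W : ℝ → V → Fin d → ℝ) (y : I → V) (h : I → Fin d → ℝ) (c : I → ℝ)
    (hflow : ∀ s : ℝ, HasDerivAt W (∑ i, c i • outer (pe (W s) (y i) (h i)) (h i)) s)
    (y₀ : V) (h₀ : Fin d → ℝ) (s : ℝ) :
    HasDerivAt (fun s => Real.log (pol (W s) h₀ y₀))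
      (∑ i, c i * dotV (pe (W s) y₀ h₀) (pe (W s) (y i) (h i)) * dotF h₀ (h i)) s := by
  classical
  set D : V → Fin d → ℝ := ∑ i, c i • outer (pe (W s) (y i) (h i)) (h i) with hD
  have hcomp : ∀ u j, HasDerivAt (fun t => W t u j) (D u j) s := by
    intro u j
    have h1 := hasDerivAt_pi.mp (hflow s) u
    exact hasDerivAt_pi.mp h1 j
  set A : V → ℝ := fun u => ∑ j, D u j * h₀ j with hA
  have hz : ∀ u, HasDerivAt (fun t => ∑ j, W t u j * h₀ j) (A u) s :=
    fun u => HasDerivAt.fun_sum (fun j _ => (hcomp u j).mul_const (h₀ j))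
  set S : ℝ → ℝ := fun t => ∑ u, Real.exp (∑ j, W t u j * h₀ j) with hS
  have hSpos : ∀ t, 0 < S t := fun t =>
    Finset.sum_pos (fun u _ => Real.exp_pos _) Finset.univ_nonempty
  have hSderiv : HasDerivAt S (∑ u, Real.exp (∑ j, W s u j * h₀ j) * A u) s :=
    HasDerivAt.fun_sum (fun u _ => (hz u).exp)
  have hlog : HasDerivAt (fun t => Real.log (S t))
      ((∑ u, Real.exp (∑ j, W s u j * h₀ j) * A u) / S s) s :=
    hSderiv.log (ne_of_gt (hSpos s))
  have heq : (fun t => Real.log (pol (W t) h₀ y₀))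
      = fun t => (∑ j, W t y₀ j * h₀ j) - Real.log (S t) := by
    funext t
    rw [pol, Real.log_div (Real.exp_ne_zero _) (ne_of_gt (hSpos t)), Real.log_exp]
  rw [heq]
  have htot := (hz y₀).fun_sub hlog
  refine htot.congr_deriv ?_
  symm
  have hpe : ∀ v, pe (W s) y₀ h₀ v
      = (if v = y₀ then 1 else 0) - Real.exp (∑ j, W s v j * h₀ j) / S s := by
    intro v; rfl
  have key : A y₀ - (∑ u, Real.exp (∑ j, W s u j * h₀ j) * A u) / S s
      = ∑ u, pe (W s) y₀ h₀ u * A u := by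
    have hSne := ne_of_gt (hSpos s)
    simp only [hpe, sub_mul, ite_mul, one_mul, zero_mul]
    rw [Finset.sum_sub_distrib, Finset.sum_ite_eq' Finset.univ y₀]
    simp only [Finset.mem_univ, if_true]
    congr 1
    rw [Finset.sum_div]
    refine Finset.sum_congr rfl (fun u _ => ?_)
    field_simp
  have expand : ∀ u, A u = ∑ i, c i * pe (W s) (y i) (h i) u * dotF h₀ (h i) := by
    intro u
    simp only [hA, hD, Finset.sum_apply, Pi.smul_apply, outer, smul_eq_mul,
      dotF, Finset.sum_mul]
    rw [Finset.sum_comm]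
    refine Finset.sum_congr rfl (fun i _ => ?_)
    rw [Finset.mul_sum]
    exact Finset.sum_congr rfl (fun j _ => by ring)
  rw [key]
  simp only [expand, Finset.mul_sum]
  rw [Finset.sum_comm]
  refine Finset.sum_congr rfl (fun i _ => ?_)
  simp only [dotV, Finset.sum_mul, Finset.mul_sum]
  exact Finset.sum_congr rfl (fun u _ => by ring)
end

section
/- (Trajectory-level lazy likelihood displacement in tool-integrated GRPO, log-linear model.) Let the positive examples be tokens (a_p, g_p)_{p ∈ P} each carrying coefficient p⁺ > 0 and the negative examples be tokens (b_q, f_q)_{q ∈ Q} each carrying coefficient −p⁻ with p⁻ > 0, and suppose W : ℝ → Matrix V (Fin d) ℝ satisfies the gradient-flow equation W′(s) = p⁺ ∑_{p ∈ P} δ_{W(s)}(a_p, g_p) ⊗ g_p − p⁻ ∑_{q ∈ Q} δ_{W(s)}(b_q, f_q) ⊗ f_q for all s. Then for any finite family of trajectory tokens (y_k, h_k)_{k ∈ K}, the trajectory log-likelihood L(s) := ∑_{k ∈ K} ln π_{W(s)}(y_k ∣ h_k) is differentiable at every s with L′(s) = p⁺ ∑_{k ∈ K} ∑_{p ∈ P}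 ⟨δ_{W(s)}(y_k, h_k), δ_{W(s)}(a_p, g_p)⟩⟨h_k, g_p⟩ − p⁻ ∑_{k ∈ K} ∑_{q ∈ Q} ⟨δ_{W(s)}(y_k, h_k), δ_{W(s)}(b_q, f_q)⟩⟨h_k, f_q⟩; in particular L′(s) < 0 if and only if the negative-gradient double sum multiplied by p⁻ strictly exceeds the positive double sum multiplied by p⁺. -/
open scoped BigOperators

lemma aux_swap {V P : Type*} [Fintype V] [Fintype P] {d : ℕ}
    (A : V → ℝ) (B : P → V → ℝ) (C : P → Fin d → ℝ) (hk : Fin d → ℝ) (c : ℝ) :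
    ∑ v, A v * ∑ j, (c * ∑ p, B p v * C p j) * hk j
      = c * ∑ p, (∑ v, A v * B p v) * (∑ j, hk j * C p j) := by
  simp only [Finset.mul_sum, Finset.sum_mul]
  conv_lhs => enter [2, v]; rw [Finset.sum_comm]
  conv_lhs => rw [Finset.sum_comm]
  refine Finset.sum_congr rfl fun p _ => ?_
  rw [Finset.sum_comm]
  exact Finset.sum_congr rfl fun j _ => Finset.sum_congr rfl fun v _ => by ring

/-- Trajectory-level lazy likelihood displacement in tool-integrated GRPO (log-linear model):
along the GRPO gradient flow driven by positive examples `(a_p, g_p)` with weight `p⁺` and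
negative examples `(b_q, f_q)` with weight `−p⁻`, the trajectory log-likelihood
`L(s) = ∑_k ln π_{W(s)}(y_k ∣ h_k)` is differentiable with the stated derivative, which is
negative iff the weighted negative-gradient double sum exceeds the weighted positive one. -/
theorem trajectory_level_LLD {V P Q K : Type*} [Fintype V] [DecidableEq V] [Nonempty V]
    [Fintype P] [Fintype Q] [Fintype K] {d : ℕ}
    (W : ℝ → V → Fin d → ℝ) (pPos pNeg : ℝ) (hpPos : 0 < pPos) (hpNeg : 0 < pNeg)
    (a : P → V) (g : P → Fin d → ℝ) (b : Q → V) (f : Q → Fin d → ℝ)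
    (hflow : ∀ s : ℝ, HasDerivAt W
      (pPos • ∑ p, outer (pe (W s) (a p) (g p)) (g p)
        - pNeg • ∑ q, outer (pe (W s) (b q) (f q)) (f q)) s)
    (y : K → V) (h : K → Fin d → ℝ) (s : ℝ) :
    HasDerivAt (fun s => ∑ k, Real.log (pol (W s) (h k) (y k)))
      (pPos * ∑ k, ∑ p, dotV (pe (W s) (y k) (h k)) (pe (W s) (a p) (g p)) * dotF (h k) (g p)
        - pNeg * ∑ k, ∑ q, dotV (pe (W s) (y k) (h k)) (pe (W s) (b q) (f q)) * dotF (h k) (f q))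
      s ∧
    ((pPos * ∑ k, ∑ p, dotV (pe (W s) (y k) (h k)) (pe (W s) (a p) (g p)) * dotF (h k) (g p)
        - pNeg * ∑ k, ∑ q, dotV (pe (W s) (y k) (h k)) (pe (W s) (b q) (f q)) * dotF (h k) (f q)
        < 0) ↔
      pNeg * ∑ k, ∑ q, dotV (pe (W s) (y k) (h k)) (pe (W s) (b q) (f q)) * dotF (h k) (f q)
        > pPos * ∑ k, ∑ p, dotV (pe (W s) (y k) (h k)) (pe (W s) (a p) (g p)) * dotF (h k) (g p)) := by
  classical
  set M : V → Fin d → ℝ := pPos • ∑ p, outer (pe (W s) (a p) (g p)) (g p)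
        - pNeg • ∑ q, outer (pe (W s) (b q) (f q)) (f q) with hM
  have hWvj : ∀ v j, HasDerivAt (fun s => W s v j) (M v j) s := by
    intro v j
    exact hasDerivAt_pi.mp (hasDerivAt_pi.mp (hflow s) v) j
  have hz : ∀ (v : V) (hk : Fin d → ℝ), HasDerivAt (fun s => ∑ j, W s v j * hk j)
      (∑ j, M v j * hk j) s :=
    fun v hk => HasDerivAt.fun_sum (fun j _ => (hWvj v j).mul_const _)
  have hpos : ∀ (t : ℝ) (hk : Fin d → ℝ), 0 < ∑ u, Real.exp (∑ j, W t u j * hk j) :=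
    fun t hk => Finset.sum_pos (fun u _ => Real.exp_pos _) Finset.univ_nonempty
  have hL : ∀ k : K, HasDerivAt (fun s => Real.log (pol (W s) (h k) (y k)))
      (∑ v, pe (W s) (y k) (h k) v * ∑ j, M v j * h k j) s := by
    intro k
    have hfun : (fun s => Real.log (pol (W s) (h k) (y k)))
        = fun s => (∑ j, W s (y k) j * h k j)
          - Real.log (∑ u, Real.exp (∑ j, W s u j * h k j)) := by
      funext t
      rw [pol, Real.log_div (Real.exp_ne_zero _) (ne_of_gt (hpos t (h k))), Real.log_exp]
    have hS : HasDerivAt (fun s => ∑ u, Real.exp (∑ j, W s u j * h k j))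
        (∑ u, Real.exp (∑ j, W s u j * h k j) * ∑ j, M u j * h k j) s :=
      HasDerivAt.fun_sum (fun u _ => by simpa [mul_comm] using (hz u (h k)).exp)
    have hlogS := hS.log (ne_of_gt (hpos s (h k)))
    have hD := (hz (y k) (h k)).fun_sub hlogS
    rw [← hfun] at hD
    refine hD.congr_deriv ?_
    symm
    have hpe : ∀ v, pe (W s) (y k) (h k) v
        = (if v = y k then 1 else 0)
          - Real.exp (∑ j, W s v j * h k j) / ∑ u, Real.exp (∑ j, W s u j * h k j) := by
      intro v; rfl
    simp only [hpe, sub_mul, Finset.sum_sub_distrib, ite_mul, one_mul, zero_mul,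
      Finset.sum_ite_eq, Finset.sum_ite_eq', Finset.mem_univ, if_true, div_mul_eq_mul_div,
      ← Finset.sum_div]
  have hsum : HasDerivAt (fun s => ∑ k, Real.log (pol (W s) (h k) (y k)))
      (∑ k, ∑ v, pe (W s) (y k) (h k) v * ∑ j, M v j * h k j) s :=
    HasDerivAt.fun_sum (fun k _ => hL k)
  have halg : (∑ k, ∑ v, pe (W s) (y k) (h k) v * ∑ j, M v j * h k j)
      = pPos * ∑ k, ∑ p, dotV (pe (W s) (y k) (h k)) (pe (W s) (a p) (g p)) * dotF (h k) (g p)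
        - pNeg * ∑ k, ∑ q, dotV (pe (W s) (y k) (h k)) (pe (W s) (b q) (f q)) * dotF (h k) (f q) := by
    have key : ∀ k : K, (∑ v, pe (W s) (y k) (h k) v * ∑ j, M v j * h k j)
        = pPos * ∑ p, dotV (pe (W s) (y k) (h k)) (pe (W s) (a p) (g p)) * dotF (h k) (g p)
          - pNeg * ∑ q, dotV (pe (W s) (y k) (h k)) (pe (W s) (b q) (f q)) * dotF (h k) (f q) := by
      intro k
      have expand : ∀ v, (∑ j, M v j * h k j)
          = (∑ j, (pPos * ∑ p, pe (W s) (a p) (g p) v * g p j) * h k j)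
            - ∑ j, (pNeg * ∑ q, pe (W s) (b q) (f q) v * f q j) * h k j := by
        intro v
        rw [← Finset.sum_sub_distrib]
        refine Finset.sum_congr rfl fun j _ => ?_
        simp only [hM, outer, Pi.sub_apply, Pi.smul_apply, Finset.sum_apply,
          smul_eq_mul, sub_mul, Finset.mul_sum]
      simp only [expand, mul_sub, Finset.sum_sub_distrib]
      rw [aux_swap, aux_swap]
      simp only [dotV, dotF]
    rw [Finset.sum_congr rfl (fun k _ => key k), Finset.sum_sub_distrib,
      ← Finset.mul_sum, ← Finset.mul_sum]
  rw [halg] at hsum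
  exact ⟨hsum, ⟨fun h' => sub_neg.mp h', fun h' => sub_neg.mpr h'⟩⟩
end

section
/- (Occurrence of Lazy Likelihood Displacement along the flow.) In the setting of the trajectory-level theorem, suppose in addition that there exist S > 0 and δ₀ ≥ 0 such that for every s ∈ [0, S], p⁻ ∑_{k ∈ K} ∑_{q ∈ Q} ⟨δ_{W(s)}(y_k, h_k), δ_{W(s)}(b_q, f_q)⟩⟨h_k, f_q⟩ − p⁺ ∑_{k ∈ K} ∑_{p ∈ P} ⟨δ_{W(s)}(y_k, h_k), δ_{W(s)}(a_p, g_p)⟩⟨h_k, g_p⟩ ≥ δ₀. Then the trajectory log-likelihood displacement satisfies ∑_{k ∈ K} ln π_{W(S)}(y_k ∣ h_k) − ∑_{k ∈ K} ln π_{W(0)}(y_k ∣ h_k) ≤ −δ₀ · S ≤ 0; i.e., Lazy Likelihood Displacement with threshold ε = −δ₀ · S occurs for the trajectory. -/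
open scoped BigOperators

lemma hasDerivAt_log_pol {V : Type*} [Fintype V] [DecidableEq V] [Nonempty V] {d : ℕ}
    (W : ℝ → V → Fin d → ℝ) (M : V → Fin d → ℝ) (s : ℝ)
    (hW : HasDerivAt W M s) (y : V) (h : Fin d → ℝ) :
    HasDerivAt (fun t => Real.log (pol (W t) h y))
      (∑ v, pe (W s) y h v * ∑ j, M v j * h j) s := by
  have hWvj : ∀ v j, HasDerivAt (fun t => W t v j) (M v j) s := fun v j =>
    hasDerivAt_pi.mp (hasDerivAt_pi.mp hW v) j
  have hlog : ∀ u : V, HasDerivAt (fun t => ∑ j, W t u j * h j) (∑ j, M u j * h j) s :=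
    fun u => HasDerivAt.fun_sum fun j _ => (hWvj u j).mul_const _
  have hZ : HasDerivAt (fun t => ∑ u, Real.exp (∑ j, W t u j * h j))
      (∑ u, Real.exp (∑ j, W s u j * h j) * (∑ j, M u j * h j)) s :=
    HasDerivAt.fun_sum fun u _ => (hlog u).exp
  have hZpos : ∀ t : ℝ, 0 < ∑ u, Real.exp (∑ j, W t u j * h j) := fun t =>
    Finset.sum_pos (fun u _ => Real.exp_pos _) Finset.univ_nonempty
  have heq : (fun t => Real.log (pol (W t) h y)) =
      fun t => (∑ j, W t y j * h j) - Real.log (∑ u, Real.exp (∑ j, W t u j * h j)) := by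
    funext t
    rw [pol, Real.log_div (Real.exp_pos _).ne' (hZpos t).ne', Real.log_exp]
  rw [heq]
  have hD := (hlog y).fun_sub (hZ.log (hZpos s).ne')
  refine hD.congr_deriv (Eq.symm ?_)
  have hZne := (hZpos s).ne'
  simp only [pe, pol, sub_mul, Finset.sum_sub_distrib, ite_mul, one_mul, zero_mul,
    Finset.sum_ite_eq', Finset.mem_univ, if_true, div_mul_eq_mul_div, ← Finset.sum_div]


lemma helperA {ι : Type*} [Fintype ι] {d : ℕ} (c : ℝ) (x : ι → Fin d → ℝ)
    (e : ι → ℝ) (hk : Fin d → ℝ) :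
    ∑ j, (c * ∑ i, e i * x i j) * hk j = c * ∑ i, e i * ∑ j, hk j * x i j := by
  simp only [Finset.mul_sum, Finset.sum_mul]
  rw [Finset.sum_comm]
  exact Finset.sum_congr rfl fun i _ => Finset.sum_congr rfl fun j _ => by ring

lemma helperB {ι V : Type*} [Fintype ι] [Fintype V] (e : V → ℝ) (u : ι → V → ℝ)
    (c : ι → ℝ) :
    ∑ v, e v * ∑ i, u i v * c i = ∑ i, (∑ v, e v * u i v) * c i := by
  simp only [Finset.mul_sum, Finset.sum_mul]
  rw [Finset.sum_comm]
  exact Finset.sum_congr rfl fun i _ => Finset.sum_congr rfl fun v _ => by ring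

/-- Occurrence of Lazy Likelihood Displacement along the GRPO gradient flow: if on `[0, S]`
the weighted negative double sum exceeds the weighted positive double sum by at least `δ₀ ≥ 0`,
then the trajectory log-likelihood displacement over `[0, S]` is at most `−δ₀ · S ≤ 0`. -/
theorem LLD_occurs {V P Q K : Type*} [Fintype V] [DecidableEq V] [Nonempty V]
    [Fintype P] [Fintype Q] [Fintype K] {d : ℕ}
    (W : ℝ → V → Fin d → ℝ) (pPos pNeg : ℝ) (hpPos : 0 < pPos) (hpNeg : 0 < pNeg)
    (a : P → V) (g : P → Fin d → ℝ) (b : Q → V) (f : Q → Fin d → ℝ)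
    (hflow : ∀ s : ℝ, HasDerivAt W
      (pPos • ∑ p, outer (pe (W s) (a p) (g p)) (g p)
        - pNeg • ∑ q, outer (pe (W s) (b q) (f q)) (f q)) s)
    (y : K → V) (h : K → Fin d → ℝ)
    (S δ₀ : ℝ) (hS : 0 < S) (hδ₀ : 0 ≤ δ₀)
    (hgap : ∀ s ∈ Set.Icc (0 : ℝ) S,
      pNeg * ∑ k, ∑ q, dotV (pe (W s) (y k) (h k)) (pe (W s) (b q) (f q)) * dotF (h k) (f q)
        - pPos * ∑ k, ∑ p, dotV (pe (W s) (y k) (h k)) (pe (W s) (a p) (g p)) * dotF (h k) (g p)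
        ≥ δ₀) :
    (∑ k, Real.log (pol (W S) (h k) (y k))) - (∑ k, Real.log (pol (W 0) (h k) (y k)))
      ≤ -δ₀ * S ∧ -δ₀ * S ≤ 0 := by
  set Ms : ℝ → V → Fin d → ℝ := fun s =>
    pPos • ∑ p, outer (pe (W s) (a p) (g p)) (g p)
      - pNeg • ∑ q, outer (pe (W s) (b q) (f q)) (f q) with hMs
  set D : ℝ → ℝ := fun s =>
    ∑ k, ∑ v, pe (W s) (y k) (h k) v * ∑ j, Ms s v j * h k j with hD
  have hL : ∀ s : ℝ, HasDerivAt (fun t => ∑ k, Real.log (pol (W t) (h k) (y k))) (D s) s :=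
    fun s => HasDerivAt.fun_sum fun k _ => hasDerivAt_log_pol W (Ms s) s (hflow s) (y k) (h k)
  have hDeq : ∀ s : ℝ,
      D s = pPos * ∑ k, ∑ p,
          dotV (pe (W s) (y k) (h k)) (pe (W s) (a p) (g p)) * dotF (h k) (g p)
        - pNeg * ∑ k, ∑ q,
          dotV (pe (W s) (y k) (h k)) (pe (W s) (b q) (f q)) * dotF (h k) (f q) := by
    intro s
    rw [hD]
    have key : ∀ k : K, ∑ v, pe (W s) (y k) (h k) v * ∑ j, Ms s v j * h k j
        = pPos * ∑ p, dotV (pe (W s) (y k) (h k)) (pe (W s) (a p) (g p)) * dotF (h k) (g p)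
          - pNeg * ∑ q, dotV (pe (W s) (y k) (h k)) (pe (W s) (b q) (f q)) * dotF (h k) (f q) := by
      intro k
      have expand : ∀ v, ∑ j, Ms s v j * h k j
        = pPos * ∑ p, pe (W s) (a p) (g p) v * dotF (h k) (g p)
          - pNeg * ∑ q, pe (W s) (b q) (f q) v * dotF (h k) (f q) := by
        intro v
        simp only [hMs, Pi.sub_apply, Pi.smul_apply, Finset.sum_apply, smul_eq_mul, outer,
          sub_mul, Finset.sum_sub_distrib, dotF]
        rw [helperA, helperA]
      simp only [expand, mul_sub, Finset.sum_sub_distrib]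
      congr 1
      · have hrw : ∀ v, pe (W s) (y k) (h k) v
            * (pPos * ∑ p, pe (W s) (a p) (g p) v * dotF (h k) (g p))
            = pPos * (pe (W s) (y k) (h k) v
              * ∑ p, pe (W s) (a p) (g p) v * dotF (h k) (g p)) := fun v => by ring
        rw [Finset.sum_congr rfl fun v _ => hrw v, ← Finset.mul_sum]
        congr 1
        have := helperB (pe (W s) (y k) (h k)) (fun p v => pe (W s) (a p) (g p) v)
          (fun p => dotF (h k) (g p))
        simpa [dotV] using this
      · have hrw : ∀ v, pe (W s) (y k) (h k) v
            * (pNeg * ∑ q, pe (W s) (b q) (f q) v * dotF (h k) (f q))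
            = pNeg * (pe (W s) (y k) (h k) v
              * ∑ q, pe (W s) (b q) (f q) v * dotF (h k) (f q)) := fun v => by ring
        rw [Finset.sum_congr rfl fun v _ => hrw v, ← Finset.mul_sum]
        congr 1
        have := helperB (pe (W s) (y k) (h k)) (fun q v => pe (W s) (b q) (f q) v)
          (fun q => dotF (h k) (f q))
        simpa [dotV] using this
    simp only [key]
    rw [Finset.sum_sub_distrib, ← Finset.mul_sum, ← Finset.mul_sum]
  set F : ℝ → ℝ := fun t => (∑ k, Real.log (pol (W t) (h k) (y k))) + δ₀ * t with hF
  have hF' : ∀ s : ℝ, HasDerivAt F (D s + δ₀) s := by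
    intro s
    have h2 : HasDerivAt (fun t : ℝ => δ₀ * t) δ₀ s := by
      simpa using (hasDerivAt_id s).const_mul δ₀
    exact (hL s).add h2
  have hanti : AntitoneOn F (Set.Icc 0 S) := by
    apply antitoneOn_of_deriv_nonpos (convex_Icc 0 S)
    · exact Continuous.continuousOn
        (continuous_iff_continuousAt.mpr fun x => (hF' x).continuousAt)
    · intro x _; exact (hF' x).differentiableAt.differentiableWithinAt
    · intro x hx
      rw [interior_Icc] at hx
      rw [(hF' x).deriv]
      have hg := hgap x ⟨hx.1.le, hx.2.le⟩
      have := hDeq x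
      linarith
  have hFS : F S ≤ F 0 :=
    hanti (Set.left_mem_Icc.mpr hS.le) (Set.right_mem_Icc.mpr hS.le) hS.le
  constructor
  · simp only [hF] at hFS
    nlinarith
  · nlinarith
end

section
/- (Prediction-error norm is governed by confidence.) For any weight matrix W, token y ∈ V and feature vector h : Fin d → ℝ, the squared Euclidean norm of the prediction-error vector satisfies (1 − π_W(y ∣ h))² ≤ ‖δ_W(y, h)‖² ≤ 2 · (1 − π_W(y ∣ h))². In particular, ‖δ_W(y, h)‖² → 0 as the token confidence π_W(y ∣ h) → 1, and low confidence yields a large prediction-error norm. -/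
open scoped BigOperators

/-- Prediction-error norm is governed by confidence:
`(1 − π_W(y∣h))² ≤ ‖δ_W(y,h)‖² ≤ 2 (1 − π_W(y∣h))²` (squared Euclidean norm). -/
theorem prediction_error_norm_bounds {V : Type*} [Fintype V] [DecidableEq V] [Nonempty V]
    {d : ℕ} (W : V → Fin d → ℝ) (y : V) (h : Fin d → ℝ) :
    (1 - pol W h y) ^ 2 ≤ ∑ v, (pe W y h v) ^ 2 ∧
    ∑ v, (pe W y h v) ^ 2 ≤ 2 * (1 - pol W h y) ^ 2 := by
  have hSpos : 0 < ∑ u, Real.exp (∑ j, W u j * h j) :=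
    Finset.sum_pos (fun u _ => Real.exp_pos _) Finset.univ_nonempty
  have hp0 : ∀ v, 0 ≤ pol W h v := fun v =>
    div_nonneg (Real.exp_pos _).le hSpos.le
  have hsum : ∑ v, pol W h v = 1 := by
    simp only [pol, ← Finset.sum_div]
    exact div_self hSpos.ne'
  have hsplit : ∑ v, (pe W y h v) ^ 2
      = (1 - pol W h y) ^ 2 + ∑ v ∈ Finset.univ.erase y, (pol W h v) ^ 2 := by
    rw [← Finset.add_sum_erase _ _ (Finset.mem_univ y)]
    congr 1
    · simp [pe]
    · exact Finset.sum_congr rfl fun v hv => by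
        simp [pe, Finset.mem_erase.mp hv |>.1]
  have herase : ∑ v ∈ Finset.univ.erase y, pol W h v = 1 - pol W h y := by
    have := Finset.add_sum_erase Finset.univ (pol W h) (Finset.mem_univ y)
    rw [hsum] at this
    linarith
  have hkey : ∑ v ∈ Finset.univ.erase y, (pol W h v) ^ 2 ≤ (1 - pol W h y) ^ 2 := by
    rw [← herase]
    exact Finset.sum_sq_le_sq_sum_of_nonneg fun v _ => hp0 v
  constructor
  · rw [hsplit]
    have : 0 ≤ ∑ v ∈ Finset.univ.erase y, (pol W h v) ^ 2 :=
      Finset.sum_nonneg fun v _ => sq_nonneg _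
    linarith
  · rw [hsplit]; linarith
end

section
/- (Low-confidence tokens inflate gradients.) For any weight matrix W, token y ∈ V and feature vector h : Fin d → ℝ, the Frobenius norm of the log-likelihood gradient matrix δ_W(y, h) ⊗ h equals ‖δ_W(y, h)‖ · ‖h‖, and consequently (1 − π_W(y ∣ h)) · ‖h‖ ≤ ‖δ_W(y, h) ⊗ h‖_F ≤ √2 · (1 − π_W(y ∣ h)) · ‖h‖. -/
open scoped BigOperators

/-- Frobenius norm of a `V × Fin d` real matrix (given as a function). -/
noncomputable def frobNorm {V : Type*} [Fintype V] {d : ℕ} (M : V → Fin d → ℝ) : ℝ :=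
  Real.sqrt (∑ v, ∑ j, (M v j) ^ 2)

/-- Low-confidence tokens inflate gradients: the Frobenius norm of the gradient matrix
`δ_W(y,h) ⊗ h` equals `‖δ_W(y,h)‖ · ‖h‖` (Euclidean norms), and is therefore between
`(1 − π_W(y∣h)) ‖h‖` and `√2 (1 − π_W(y∣h)) ‖h‖`. -/
theorem gradient_norm_bounds {V : Type*} [Fintype V] [DecidableEq V] [Nonempty V]
    {d : ℕ} (W : V → Fin d → ℝ) (y : V) (h : Fin d → ℝ) :
    frobNorm (outer (pe W y h) h)
      = Real.sqrt (∑ v, (pe W y h v) ^ 2) * Real.sqrt (∑ j, (h j) ^ 2) ∧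
    (1 - pol W h y) * Real.sqrt (∑ j, (h j) ^ 2) ≤ frobNorm (outer (pe W y h) h) ∧
    frobNorm (outer (pe W y h) h)
      ≤ Real.sqrt 2 * ((1 - pol W h y) * Real.sqrt (∑ j, (h j) ^ 2)) := by
  classical
  have hS : (0:ℝ) < ∑ u, Real.exp (∑ j, W u j * h j) :=
    Finset.sum_pos (fun u _ => Real.exp_pos _) Finset.univ_nonempty
  have hpol_nonneg : ∀ v, 0 ≤ pol W h v := fun v =>
    div_nonneg (Real.exp_pos _).le hS.le
  have hsum : ∑ v, pol W h v = 1 := by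
    simp only [pol, ← Finset.sum_div]
    exact div_self hS.ne'
  have hpol_le : pol W h y ≤ 1 := by
    calc pol W h y ≤ ∑ v, pol W h v :=
          Finset.single_le_sum (fun v _ => hpol_nonneg v) (Finset.mem_univ y)
      _ = 1 := hsum
  set P : ℝ := 1 - pol W h y with hP
  have hPnn : 0 ≤ P := by simp [hP]; linarith
  set A : ℝ := ∑ v, (pe W y h v) ^ 2 with hA
  set B : ℝ := ∑ j, (h j) ^ 2 with hB
  have hAnn : 0 ≤ A := Finset.sum_nonneg (fun v _ => sq_nonneg _)
  have hBnn : 0 ≤ B := Finset.sum_nonneg (fun j _ => sq_nonneg _)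
  have hfrob : frobNorm (outer (pe W y h) h) = Real.sqrt A * Real.sqrt B := by
    unfold frobNorm outer
    rw [← Real.sqrt_mul hAnn]
    congr 1
    rw [hA, hB, Finset.sum_mul]
    refine Finset.sum_congr rfl fun v _ => ?_
    rw [Finset.mul_sum]
    exact Finset.sum_congr rfl fun j _ => by ring
  have hay : pe W y h y = P := by simp [pe, hP]
  have hlow : P ^ 2 ≤ A := by
    have := Finset.single_le_sum (f := fun v => (pe W y h v) ^ 2)
      (fun v _ => sq_nonneg _) (Finset.mem_univ y)
    simpa [hay, hA] using this
  have hrest : ∑ v ∈ Finset.univ.erase y, pol W h v = P := by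
    have := Finset.add_sum_erase Finset.univ (pol W h) (Finset.mem_univ y)
    rw [hsum] at this
    rw [hP]; linarith
  have hhigh : A ≤ 2 * P ^ 2 := by
    have hsplit : A = P ^ 2 + ∑ v ∈ Finset.univ.erase y, (pe W y h v) ^ 2 := by
      rw [hA, ← Finset.add_sum_erase Finset.univ _ (Finset.mem_univ y), hay]
    have hub : ∑ v ∈ Finset.univ.erase y, (pe W y h v) ^ 2 ≤ P ^ 2 := by
      have heq : ∀ v ∈ Finset.univ.erase y, (pe W y h v) ^ 2 = (pol W h v) ^ 2 := by
        intro v hv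
        have : v ≠ y := Finset.ne_of_mem_erase hv
        simp [pe, this]
      rw [Finset.sum_congr rfl heq, ← hrest]
      exact Finset.sum_sq_le_sq_sum_of_nonneg (fun v _ => hpol_nonneg v)
    linarith
  have hsqA_low : P ≤ Real.sqrt A := by
    have := Real.sqrt_le_sqrt hlow
    rwa [Real.sqrt_sq hPnn] at this
  have hsqA_high : Real.sqrt A ≤ Real.sqrt 2 * P := by
    have := Real.sqrt_le_sqrt hhigh
    rwa [Real.sqrt_mul (by norm_num : (0:ℝ) ≤ 2), Real.sqrt_sq hPnn] at this
  refine ⟨hfrob, ?_, ?_⟩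
  · rw [hfrob]
    exact mul_le_mul_of_nonneg_right hsqA_low (Real.sqrt_nonneg _)
  · rw [hfrob, ← mul_assoc]
    exact mul_le_mul_of_nonneg_right hsqA_high (Real.sqrt_nonneg _)
end

section
/- (A correct action embedded in an incorrect response is penalized.) Suppose W : ℝ → Matrix V (Fin d) ℝ satisfies W′(s) = −c · (δ_{W(s)}(y, h) ⊗ h) for all s, with a single negative training example (y, h) and coefficient c ≥ 0 (a negative-gradient update on the token (y, h)). Then s ↦ ln π_{W(s)}(y ∣ h) is differentiable with derivative −c · ‖δ_{W(s)}(y, h)‖² · ‖h‖² ≤ 0 at every s; moreover if c > 0, h ≠ 0, and π_{W(s)}(y ∣ h) < 1, this derivative is strictly negative, so the likelihood of the token (y, h) strictly decreases. -/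
open scoped BigOperators

/-- A correct action embedded in an incorrect response is penalized: under the negative-gradient
flow `W′(s) = −c · (δ_{W(s)}(y,h) ⊗ h)` with `c ≥ 0`, the log-likelihood of `(y, h)` has
derivative `−c ‖δ‖² ‖h‖² ≤ 0` everywhere; if moreover `c > 0`, `h ≠ 0`, and `π_{W(s)}(y∣h) < 1`,
the derivative is strictly negative, so the token's likelihood strictly decreases. -/
theorem negative_gradient_penalizes {V : Type*} [Fintype V] [DecidableEq V] [Nonempty V]
    {d : ℕ} (W : ℝ → V → Fin d → ℝ) (y : V) (h : Fin d → ℝ) (c : ℝ) (hc : 0 ≤ c)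
    (hflow : ∀ s : ℝ, HasDerivAt W (-(c • outer (pe (W s) y h) h)) s) :
    ∀ s : ℝ,
      HasDerivAt (fun s => Real.log (pol (W s) h y))
        (-(c * (∑ v, (pe (W s) y h v) ^ 2) * (∑ j, (h j) ^ 2))) s ∧
      -(c * (∑ v, (pe (W s) y h v) ^ 2) * (∑ j, (h j) ^ 2)) ≤ 0 ∧
      (0 < c → h ≠ 0 → pol (W s) h y < 1 →
        -(c * (∑ v, (pe (W s) y h v) ^ 2) * (∑ j, (h j) ^ 2)) < 0) := by
  intro s
  set δ : V → ℝ := pe (W s) y h with hδ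
  have hSpos : ∀ t : ℝ, 0 < ∑ u, Real.exp (∑ j, W t u j * h j) := fun t =>
    Finset.sum_pos (fun u _ => Real.exp_pos _) Finset.univ_nonempty
  set H : ℝ := ∑ j, (h j) ^ 2 with hH
  have hHnn : 0 ≤ H := Finset.sum_nonneg fun j _ => sq_nonneg _
  -- coordinatewise derivatives
  have hWcoord : ∀ u j, HasDerivAt (fun t => W t u j) (-(c * (δ u * h j))) s := by
    intro u j
    have h1 := hasDerivAt_pi.mp (hflow s) u
    have h2 := hasDerivAt_pi.mp h1 j
    simpa [outer, smul_eq_mul] using h2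
  have hz : ∀ u, HasDerivAt (fun t => ∑ j, W t u j * h j) (-(c * δ u * H)) s := by
    intro u
    have : HasDerivAt (fun t => ∑ j, W t u j * h j) (∑ j, -(c * (δ u * h j)) * h j) s := HasDerivAt.fun_sum (fun j (_ : j ∈ Finset.univ) => (hWcoord u j).mul_const (h j))
    convert this using 1
    rw [hH, Finset.mul_sum, ← Finset.sum_neg_distrib]
    exact Finset.sum_congr rfl fun j _ => by ring
  set S : ℝ := ∑ u, Real.exp (∑ j, W s u j * h j) with hS
  have hSne : S ≠ 0 := ne_of_gt (hSpos s)
  have hSd : HasDerivAt (fun t => ∑ u, Real.exp (∑ j, W t u j * h j))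
      (∑ u, Real.exp (∑ j, W s u j * h j) * (-(c * δ u * H))) s :=
    HasDerivAt.fun_sum fun u _ => (hz u).exp
  have hfun : (fun t => Real.log (pol (W t) h y)) =
      fun t => (∑ j, W t y j * h j) - Real.log (∑ u, Real.exp (∑ j, W t u j * h j)) := by
    funext t
    rw [pol, Real.log_div (Real.exp_ne_zero _) (ne_of_gt (hSpos t)), Real.log_exp]
  have hderiv : HasDerivAt (fun t => Real.log (pol (W t) h y))
      (-(c * δ y * H) - (∑ u, Real.exp (∑ j, W s u j * h j) * (-(c * δ u * H))) / S) s := by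
    rw [hfun]
    exact (hz y).sub (hSd.log hSne)
  -- key algebraic identity
  have key : ∑ v, δ v ^ 2 = δ y - ∑ u, (Real.exp (∑ j, W s u j * h j) / S) * δ u := by
    have h1 : ∀ v, δ v ^ 2 = (if v = y then δ v else 0) -
        (Real.exp (∑ j, W s v j * h j) / S) * δ v := by
      intro v
      have : δ v = (if v = y then 1 else 0) - Real.exp (∑ j, W s v j * h j) / S := rfl
      by_cases hv : v = y
      · rw [sq]; nth_rewrite 2 [this]; simp [hv]; ring
      · rw [sq]; nth_rewrite 2 [this]; simp [hv]; ring
    rw [Finset.sum_congr rfl fun v _ => h1 v, Finset.sum_sub_distrib,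
      Finset.sum_ite_eq' Finset.univ y δ]
    simp
  have hEq : -(c * δ y * H) - (∑ u, Real.exp (∑ j, W s u j * h j) * (-(c * δ u * H))) / S
      = -(c * (∑ v, δ v ^ 2) * H) := by
    rw [key]
    rw [Finset.sum_div] at *
    have : ∀ u, Real.exp (∑ j, W s u j * h j) * (-(c * δ u * H)) / S
        = -(c * H) * ((Real.exp (∑ j, W s u j * h j) / S) * δ u) := fun u => by ring
    rw [Finset.sum_congr rfl fun u _ => this u, ← Finset.mul_sum]
    ring
  refine ⟨hEq ▸ hderiv, ?_, ?_⟩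
  · have : 0 ≤ c * (∑ v, δ v ^ 2) * H :=
      mul_nonneg (mul_nonneg hc (Finset.sum_nonneg fun v _ => sq_nonneg _)) hHnn
    linarith
  · intro hcpos hh hpol
    have hδy : 0 < δ y := by
      have : δ y = 1 - pol (W s) h y := by simp [hδ, pe]
      rw [this]; linarith
    have hsum : 0 < ∑ v, δ v ^ 2 :=
      Finset.sum_pos' (fun v _ => sq_nonneg _) ⟨y, Finset.mem_univ y, pow_pos hδy 2⟩
    have hHpos : 0 < H := by
      obtain ⟨j, hj⟩ := Function.ne_iff.mp hh
      exact Finset.sum_pos' (fun j _ => sq_nonneg _) ⟨j, Finset.mem_univ j, pow_pos (abs_pos.mpr hj) 2 |>.trans_eq (sq_abs _)⟩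
    have : 0 < c * (∑ v, δ v ^ 2) * H := by positivity
    linarith
end

section
/- (The weighted objective is nondecreasing along its gradient flow.) Suppose W : ℝ → Matrix V (Fin d) ℝ follows the gradient flow associated with training examples (y_i, h_i)_{i ∈ I} and coefficients (c_i)_{i ∈ I}. Then the objective J(s) := ∑_{i ∈ I} c_i ln π_{W(s)}(y_i ∣ h_i) is differentiable with J′(s) = ∑_{i ∈ I} ∑_{j ∈ I} c_i c_j ⟨δ_{W(s)}(y_i, h_i), δ_{W(s)}(y_j, h_j)⟩ ⟨h_i, h_j⟩ ≥ 0 for all s; in particular J is monotone nondecreasing, even though individual response likelihoods may decrease. -/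
open scoped BigOperators

/-- Commuting two pairs of finite sums. -/
lemma sum4_comm {α β γ ε M : Type*} [Fintype α] [Fintype β] [Fintype γ] [Fintype ε]
    [AddCommMonoid M] (f : α → β → γ → ε → M) :
    ∑ a, ∑ b, ∑ g, ∑ e, f a b g e = ∑ g, ∑ e, ∑ a, ∑ b, f a b g e := by
  rw [show (∑ a, ∑ b, ∑ g, ∑ e, f a b g e) = ∑ p : α × β, ∑ q : γ × ε, f p.1 p.2 q.1 q.2 by
    rw [Fintype.sum_prod_type]; exact Finset.sum_congr rfl fun a _ =>
      Finset.sum_congr rfl fun b _ => (Fintype.sum_prod_type' _).symm]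
  rw [show (∑ g, ∑ e, ∑ a, ∑ b, f a b g e) = ∑ q : γ × ε, ∑ p : α × β, f p.1 p.2 q.1 q.2 by
    rw [Fintype.sum_prod_type]; exact Finset.sum_congr rfl fun g _ =>
      Finset.sum_congr rfl fun e _ => (Fintype.sum_prod_type' _).symm]
  exact Finset.sum_comm

/-- Commuting a triple of finite sums. -/
lemma sum3_comm {α β γ M : Type*} [Fintype α] [Fintype β] [Fintype γ]
    [AddCommMonoid M] (f : α → β → γ → M) :
    ∑ a, ∑ b, ∑ g, f a b g = ∑ b, ∑ g, ∑ a, f a b g := by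
  rw [Finset.sum_comm]
  exact Finset.sum_congr rfl fun b _ => Finset.sum_comm

/-- The PSD double sum equals a sum of squares. -/
lemma key {I V : Type*} [Fintype I] [Fintype V] {d : ℕ} (c : I → ℝ) (δ : I → V → ℝ)
    (h : I → Fin d → ℝ) :
    ∑ i, ∑ j, c i * c j * (∑ v, δ i v * δ j v) * (∑ k, h i k * h j k)
      = ∑ v, ∑ k, (∑ i, c i * (δ i v * h i k)) ^ 2 := by
  have this1 : ∀ i j : I, c i * c j * (∑ v, δ i v * δ j v) * (∑ k, h i k * h j k)
      = ∑ v, ∑ k, (c i * (δ i v * h i k)) * (c j * (δ j v * h j k)) := by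
    intro i j
    rw [mul_assoc, Finset.sum_mul_sum, Finset.mul_sum]
    apply Finset.sum_congr rfl; intro v _
    rw [Finset.mul_sum]
    apply Finset.sum_congr rfl; intro k _
    ring
  simp only [this1]
  rw [sum4_comm]
  apply Finset.sum_congr rfl; intro v _
  apply Finset.sum_congr rfl; intro k _
  rw [sq, Finset.sum_mul_sum]

/-- The flow-derivative of the objective equals the same sum of squares. -/
lemma key2 {I V : Type*} [Fintype I] [Fintype V] {d : ℕ} (c : I → ℝ) (δ : I → V → ℝ)
    (h : I → Fin d → ℝ) :
    ∑ i, c i * (∑ v, δ i v * (∑ k, (∑ j, c j * (δ j v * h j k)) * h i k))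
      = ∑ v, ∑ k, (∑ i, c i * (δ i v * h i k)) ^ 2 := by
  have this1 : ∀ i : I, c i * (∑ v, δ i v * (∑ k, (∑ j, c j * (δ j v * h j k)) * h i k))
      = ∑ v, ∑ k, (∑ j, c j * (δ j v * h j k)) * (c i * (δ i v * h i k)) := by
    intro i
    rw [Finset.mul_sum]
    apply Finset.sum_congr rfl; intro v _
    rw [Finset.mul_sum, Finset.mul_sum]
    apply Finset.sum_congr rfl; intro k _
    ring
  simp only [this1]
  rw [sum3_comm]
  apply Finset.sum_congr rfl; intro v _
  apply Finset.sum_congr rfl; intro k _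
  rw [← Finset.mul_sum, sq]

/-- Derivative of the log-likelihood of a single example along the flow. -/
lemma logpol_hasDerivAt {V I : Type*} [Fintype V] [DecidableEq V] [Nonempty V]
    [Fintype I] {d : ℕ} (W : ℝ → V → Fin d → ℝ) (y : I → V) (h : I → Fin d → ℝ) (c : I → ℝ)
    (hflow : ∀ s : ℝ, HasDerivAt W (∑ i, c i • outer (pe (W s) (y i) (h i)) (h i)) s)
    (s : ℝ) (i : I) :
    HasDerivAt (fun s => Real.log (pol (W s) (h i) (y i)))
      (∑ v, pe (W s) (y i) (h i) v *
        (∑ k, (∑ i', c i' * (pe (W s) (y i') (h i') v * h i' k)) * h i k)) s := by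
  set M : V → Fin d → ℝ := fun v k => ∑ i', c i' * (pe (W s) (y i') (h i') v * h i' k) with hM
  have hW : ∀ v k, HasDerivAt (fun s => W s v k) (M v k) s := by
    intro v k
    have := (hasDerivAt_pi.mp ((hasDerivAt_pi.mp (hflow s)) v)) k
    refine this.congr_deriv ?_
    simp [hM, Finset.sum_apply, outer, mul_assoc]
  have hL : ∀ u : V, HasDerivAt (fun s => ∑ k, W s u k * h i k) (∑ k, M u k * h i k) s :=
    fun u => HasDerivAt.fun_sum fun k _ => (hW u k).mul_const _
  have Zpos : ∀ t : ℝ, 0 < ∑ u, Real.exp (∑ k, W t u k * h i k) :=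
    fun t => Finset.sum_pos (fun u _ => Real.exp_pos _) Finset.univ_nonempty
  have hZ : HasDerivAt (fun s => ∑ u, Real.exp (∑ k, W s u k * h i k))
      (∑ u, Real.exp (∑ k, W s u k * h i k) * (∑ k, M u k * h i k)) s :=
    HasDerivAt.fun_sum fun u _ => (hL u).exp
  have heq : (fun s => Real.log (pol (W s) (h i) (y i)))
      = fun s => (∑ k, W s (y i) k * h i k)
        - Real.log (∑ u, Real.exp (∑ k, W s u k * h i k)) := by
    funext t
    rw [pol, Real.log_div (Real.exp_ne_zero _) (ne_of_gt (Zpos t)), Real.log_exp]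
  rw [heq]
  have hd := (hL (y i)).sub (hZ.log (ne_of_gt (Zpos s)))
  refine hd.congr_deriv (Eq.symm ?_)
  rw [Finset.sum_div]
  have expand : ∀ v, pe (W s) (y i) (h i) v * (∑ k, M v k * h i k)
      = (if v = y i then 1 else 0) * (∑ k, M v k * h i k)
        - (Real.exp (∑ k, W s v k * h i k) * (∑ k, M v k * h i k))
          / (∑ u, Real.exp (∑ k, W s u k * h i k)) := by
    intro v
    rw [pe, pol, sub_mul, div_mul_eq_mul_div]
  simp +zetaDelta only [expand, Finset.sum_sub_distrib, ite_mul, one_mul, zero_mul,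
    Finset.sum_ite_eq', Finset.mem_univ, if_pos]

/-- The weighted objective is nondecreasing along its gradient flow:
`J(s) = ∑_i c_i ln π_{W(s)}(y_i ∣ h_i)` is differentiable with derivative the PSD double sum
`∑_i ∑_j c_i c_j ⟨δ_i, δ_j⟩ ⟨h_i, h_j⟩ ≥ 0`, hence `J` is monotone nondecreasing. -/
theorem objective_nondecreasing {V I : Type*} [Fintype V] [DecidableEq V] [Nonempty V]
    [Fintype I] {d : ℕ} (W : ℝ → V → Fin d → ℝ) (y : I → V) (h : I → Fin d → ℝ) (c : I → ℝ)
    (hflow : ∀ s : ℝ, HasDerivAt W (∑ i, c i • outer (pe (W s) (y i) (h i)) (h i)) s) :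
    (∀ s : ℝ,
      HasDerivAt (fun s => ∑ i, c i * Real.log (pol (W s) (h i) (y i)))
        (∑ i, ∑ j, c i * c j * dotV (pe (W s) (y i) (h i)) (pe (W s) (y j) (h j))
          * dotF (h i) (h j)) s ∧
      0 ≤ ∑ i, ∑ j, c i * c j * dotV (pe (W s) (y i) (h i)) (pe (W s) (y j) (h j))
          * dotF (h i) (h j)) ∧
    Monotone (fun s => ∑ i, c i * Real.log (pol (W s) (h i) (y i))) := by
  have hval : ∀ s : ℝ, ∑ i, ∑ j, c i * c j * dotV (pe (W s) (y i) (h i)) (pe (W s) (y j) (h j))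
      * dotF (h i) (h j)
      = ∑ v, ∑ k, (∑ i, c i * (pe (W s) (y i) (h i) v * h i k)) ^ 2 := by
    intro s
    simp only [dotV, dotF]
    exact key c (fun i => pe (W s) (y i) (h i)) h
  have hJ : ∀ s : ℝ, HasDerivAt (fun s => ∑ i, c i * Real.log (pol (W s) (h i) (y i)))
      (∑ i, ∑ j, c i * c j * dotV (pe (W s) (y i) (h i)) (pe (W s) (y j) (h j))
        * dotF (h i) (h j)) s := by
    intro s
    have hd : HasDerivAt (fun s => ∑ i, c i * Real.log (pol (W s) (h i) (y i)))
        (∑ i, c i * (∑ v, pe (W s) (y i) (h i) v *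
          (∑ k, (∑ i', c i' * (pe (W s) (y i') (h i') v * h i' k)) * h i k))) s :=
      HasDerivAt.fun_sum fun i _ => (logpol_hasDerivAt W y h c hflow s i).const_mul (c i)
    refine hd.congr_deriv ?_
    rw [hval s, key2]
  have hnn : ∀ s : ℝ, 0 ≤ ∑ i, ∑ j, c i * c j
      * dotV (pe (W s) (y i) (h i)) (pe (W s) (y j) (h j)) * dotF (h i) (h j) := by
    intro s
    rw [hval s]
    exact Finset.sum_nonneg fun v _ => Finset.sum_nonneg fun k _ => sq_nonneg _
  refine ⟨fun s => ⟨hJ s, hnn s⟩, ?_⟩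
  exact monotone_of_deriv_nonneg (fun s => (hJ s).differentiableAt)
    (fun s => by rw [(hJ s).deriv]; exact hnn s)
end

section
/- (Magnitude bound on the likelihood drift.) Suppose W : ℝ → Matrix V (Fin d) ℝ follows the gradient flow associated with training examples (y_i, h_i)_{i ∈ I} and coefficients (c_i)_{i ∈ I}. Then for every target token y ∈ V, feature vector h : Fin d → ℝ, and time s, the derivative of s ↦ ln π_{W(s)}(y ∣ h) is bounded in absolute value by ∑_{i ∈ I} |c_i| · ‖δ_{W(s)}(y, h)‖ · ‖δ_{W(s)}(y_i, h_i)‖ · ‖h‖ · ‖h_i‖, and hence by 2 · (1 − π_{W(s)}(y ∣ h)) · ‖h‖ · ∑_{i ∈ I} |c_i| · (1 − π_{W(s)}(y_i ∣ h_i)) · ‖h_i‖. -/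
open scoped BigOperators

/-- Euclidean norm on `V`-indexed real vectors. -/
noncomputable def enormV {V : Type*} [Fintype V] (a : V → ℝ) : ℝ :=
  Real.sqrt (∑ v, (a v) ^ 2)

/-- Euclidean norm on `Fin d`-indexed real vectors. -/
noncomputable def enormF {d : ℕ} (a : Fin d → ℝ) : ℝ :=
  Real.sqrt (∑ j, (a j) ^ 2)

section helpers
variable {V : Type*} [Fintype V] [Nonempty V] {d : ℕ}

lemma Zpos (f : V → ℝ) : 0 < ∑ u, Real.exp (f u) :=
  Finset.sum_pos (fun u _ => Real.exp_pos _) Finset.univ_nonempty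

lemma pol_pos (W : V → Fin d → ℝ) (h : Fin d → ℝ) (v : V) : 0 < pol W h v :=
  div_pos (Real.exp_pos _) (Zpos _)

lemma pol_sum (W : V → Fin d → ℝ) (h : Fin d → ℝ) : ∑ v, pol W h v = 1 := by
  unfold pol
  rw [← Finset.sum_div, div_self (ne_of_gt (Zpos _))]

lemma pol_le_one (W : V → Fin d → ℝ) (h : Fin d → ℝ) (v : V) : pol W h v ≤ 1 := by
  rw [← pol_sum W h]
  exact Finset.single_le_sum (fun u _ => (pol_pos W h u).le) (Finset.mem_univ v)

lemma abs_dotV_le (a b : V → ℝ) : |dotV a b| ≤ enormV a * enormV b := by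
  rw [dotV, enormV, enormV, ← Real.sqrt_mul (by positivity),
    ← Real.sqrt_sq_eq_abs]
  exact Real.sqrt_le_sqrt (Finset.sum_mul_sq_le_sq_mul_sq _ _ _)

lemma abs_dotF_le (a b : Fin d → ℝ) : |dotF a b| ≤ enormF a * enormF b := by
  rw [dotF, enormF, enormF, ← Real.sqrt_mul (by positivity),
    ← Real.sqrt_sq_eq_abs]
  exact Real.sqrt_le_sqrt (Finset.sum_mul_sq_le_sq_mul_sq _ _ _)

lemma enormV_nonneg (a : V → ℝ) : 0 ≤ enormV a := Real.sqrt_nonneg _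
lemma enormF_nonneg (a : Fin d → ℝ) : 0 ≤ enormF a := Real.sqrt_nonneg _

lemma enormV_pe_le [DecidableEq V] (W : V → Fin d → ℝ) (yy : V) (hh : Fin d → ℝ) :
    enormV (pe W yy hh) ≤ Real.sqrt 2 * (1 - pol W hh yy) := by
  have hsum : ∑ v ∈ Finset.univ.erase yy, pol W hh v = 1 - pol W hh yy := by
    have := pol_sum W hh
    rw [← Finset.add_sum_erase _ _ (Finset.mem_univ yy)] at this
    linarith
  have hb : ∀ v ∈ Finset.univ.erase yy, (pe W yy hh v)^2 ≤ (1 - pol W hh yy) * pol W hh v := by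
    intro v hv
    have hne : v ≠ yy := Finset.ne_of_mem_erase hv
    have hpe : pe W yy hh v = -(pol W hh v) := by simp [pe, hne]
    rw [hpe, neg_pow]
    have h1 : pol W hh v ≤ 1 - pol W hh yy := by
      rw [← hsum]
      exact Finset.single_le_sum (f := fun v => pol W hh v)
        (fun u _ => (pol_pos W hh u).le) hv
    have := (pol_pos W hh v).le
    nlinarith
  have hmain : ∑ v, (pe W yy hh v)^2 ≤ 2 * (1 - pol W hh yy)^2 := by
    rw [← Finset.add_sum_erase _ _ (Finset.mem_univ yy)]
    have h1 : (pe W yy hh yy)^2 = (1 - pol W hh yy)^2 := by simp [pe]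
    have h2 : ∑ v ∈ Finset.univ.erase yy, (pe W yy hh v)^2
        ≤ (1 - pol W hh yy) * (1 - pol W hh yy) := by
      calc ∑ v ∈ Finset.univ.erase yy, (pe W yy hh v)^2
          ≤ ∑ v ∈ Finset.univ.erase yy, (1 - pol W hh yy) * pol W hh v :=
            Finset.sum_le_sum hb
        _ = (1 - pol W hh yy) * (1 - pol W hh yy) := by rw [← Finset.mul_sum, hsum]
    nlinarith
  calc enormV (pe W yy hh) ≤ Real.sqrt (2 * (1 - pol W hh yy)^2) :=
        Real.sqrt_le_sqrt hmain
    _ = Real.sqrt 2 * (1 - pol W hh yy) := by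
        rw [Real.sqrt_mul (by norm_num), Real.sqrt_sq (by linarith [pol_le_one W hh yy])]

end helpers

/-- Magnitude bound on the likelihood drift: along the gradient flow, the derivative of
`s ↦ ln π_{W(s)}(y₀ ∣ h₀)` is bounded in absolute value by
`∑_i |c_i| ‖δ(y₀,h₀)‖ ‖δ(y_i,h_i)‖ ‖h₀‖ ‖h_i‖`, and hence by
`2 (1 − π(y₀∣h₀)) ‖h₀‖ ∑_i |c_i| (1 − π(y_i∣h_i)) ‖h_i‖`. -/
theorem likelihood_drift_bound {V I : Type*} [Fintype V] [DecidableEq V] [Nonempty V]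
    [Fintype I] {d : ℕ} (W : ℝ → V → Fin d → ℝ) (y : I → V) (h : I → Fin d → ℝ) (c : I → ℝ)
    (hflow : ∀ s : ℝ, HasDerivAt W (∑ i, c i • outer (pe (W s) (y i) (h i)) (h i)) s)
    (y₀ : V) (h₀ : Fin d → ℝ) (s : ℝ) :
    ∃ D : ℝ,
      HasDerivAt (fun s => Real.log (pol (W s) h₀ y₀)) D s ∧
      |D| ≤ ∑ i, |c i| * enormV (pe (W s) y₀ h₀) * enormV (pe (W s) (y i) (h i))
              * enormF h₀ * enormF (h i) ∧
      |D| ≤ 2 * (1 - pol (W s) h₀ y₀) * enormF h₀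
              * ∑ i, |c i| * (1 - pol (W s) (h i) (y i)) * enormF (h i) := by
  classical
  set A : V → Fin d → ℝ := ∑ i, c i • outer (pe (W s) (y i) (h i)) (h i) with hA
  -- componentwise derivatives
  have hcomp : ∀ (u : V) (j : Fin d), HasDerivAt (fun t => W t u j) (A u j) s := by
    intro u j
    exact (((ContinuousLinearMap.proj (R := ℝ) (φ := fun _ : Fin d => ℝ) j).comp
      (ContinuousLinearMap.proj (R := ℝ) (φ := fun _ : V => Fin d → ℝ) u)).hasFDerivAt.comp_hasDerivAt
      s (hflow s))
  -- logit derivatives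
  have hg : ∀ u : V, HasDerivAt (fun t => ∑ j, W t u j * h₀ j) (∑ j, A u j * h₀ j) s :=
    fun u => HasDerivAt.fun_sum (fun j _ => (hcomp u j).mul_const (h₀ j))
  set Z : ℝ → ℝ := fun t => ∑ u, Real.exp (∑ j, W t u j * h₀ j) with hZ
  have hZpos : ∀ t, 0 < Z t := fun t => Zpos _
  have hZd : HasDerivAt Z (∑ u, Real.exp (∑ j, W s u j * h₀ j) * (∑ j, A u j * h₀ j)) s :=
    HasDerivAt.fun_sum (fun u _ => (hg u).exp)
  set D : ℝ := (∑ j, A y₀ j * h₀ j)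
    - (∑ u, Real.exp (∑ j, W s u j * h₀ j) * (∑ j, A u j * h₀ j)) / Z s with hD
  have hlog : ∀ t, Real.log (pol (W t) h₀ y₀) = (∑ j, W t y₀ j * h₀ j) - Real.log (Z t) := by
    intro t
    rw [pol, Real.log_div (Real.exp_ne_zero _) (ne_of_gt (hZpos t)), Real.log_exp]
  have hder : HasDerivAt (fun t => Real.log (pol (W t) h₀ y₀)) D s := by
    have : HasDerivAt (fun t => (∑ j, W t y₀ j * h₀ j) - Real.log (Z t)) D s :=
      (hg y₀).sub (hZd.log (ne_of_gt (hZpos s)))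
    exact this.congr_of_eventuallyEq (Filter.Eventually.of_forall fun t => (hlog t))
  -- identify D
  have hDval : D = ∑ i, c i * dotV (pe (W s) y₀ h₀) (pe (W s) (y i) (h i)) * dotF h₀ (h i) := by
    have hpol : ∀ u, Real.exp (∑ j, W s u j * h₀ j) / Z s = pol (W s) h₀ u := fun u => rfl
    have h1 : D = ∑ u, pe (W s) y₀ h₀ u * (∑ j, A u j * h₀ j) := by
      rw [hD]
      have : (∑ u, Real.exp (∑ j, W s u j * h₀ j) * (∑ j, A u j * h₀ j)) / Z s
          = ∑ u, pol (W s) h₀ u * (∑ j, A u j * h₀ j) := by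
        rw [Finset.sum_div]
        refine Finset.sum_congr rfl fun u _ => ?_
        rw [← hpol u]; ring
      rw [this]
      simp only [pe, sub_mul, Finset.sum_sub_distrib, ite_mul, one_mul, zero_mul]
      rw [Finset.sum_ite_eq' Finset.univ y₀ (fun u => ∑ j, A u j * h₀ j)]
      simp
    rw [h1]
    have hAexp : ∀ u j, A u j = ∑ i, c i * pe (W s) (y i) (h i) u * h i j := by
      intro u j
      rw [hA]
      simp [outer, Finset.sum_apply, mul_assoc]
    calc ∑ u, pe (W s) y₀ h₀ u * (∑ j, A u j * h₀ j)
        = ∑ u, ∑ i, ∑ j, pe (W s) y₀ h₀ u * (c i * pe (W s) (y i) (h i) u * h i j * h₀ j) := by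
          refine Finset.sum_congr rfl fun u _ => ?_
          calc pe (W s) y₀ h₀ u * (∑ j, A u j * h₀ j)
              = ∑ j, ∑ i, pe (W s) y₀ h₀ u * (c i * pe (W s) (y i) (h i) u * h i j * h₀ j) := by
                rw [Finset.mul_sum]
                refine Finset.sum_congr rfl fun j _ => ?_
                rw [hAexp u j, Finset.sum_mul, Finset.mul_sum]
            _ = _ := Finset.sum_comm
      _ = ∑ i, c i * dotV (pe (W s) y₀ h₀) (pe (W s) (y i) (h i)) * dotF h₀ (h i) := by
          rw [Finset.sum_comm]
          refine Finset.sum_congr rfl fun i _ => ?_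
          rw [dotV, dotF]
          simp only [Finset.mul_sum, Finset.sum_mul]
          rw [Finset.sum_comm]
          exact Finset.sum_congr rfl fun j _ => Finset.sum_congr rfl fun u _ => by ring
  refine ⟨D, hder, ?_, ?_⟩
  · rw [hDval]
    calc |∑ i, c i * dotV (pe (W s) y₀ h₀) (pe (W s) (y i) (h i)) * dotF h₀ (h i)|
        ≤ ∑ i, |c i * dotV (pe (W s) y₀ h₀) (pe (W s) (y i) (h i)) * dotF h₀ (h i)| :=
          Finset.abs_sum_le_sum_abs _ _
      _ ≤ ∑ i, |c i| * enormV (pe (W s) y₀ h₀) * enormV (pe (W s) (y i) (h i))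
              * enormF h₀ * enormF (h i) := by
          refine Finset.sum_le_sum fun i _ => ?_
          rw [abs_mul, abs_mul]
          have h1 := abs_dotV_le (pe (W s) y₀ h₀) (pe (W s) (y i) (h i))
          have h2 := abs_dotF_le h₀ (h i)
          have hc := abs_nonneg (c i)
          have n1 := enormV_nonneg (pe (W s) y₀ h₀)
          have n2 := enormV_nonneg (pe (W s) (y i) (h i))
          have n3 := enormF_nonneg h₀
          have n4 := enormF_nonneg (h i)
          calc |c i| * |dotV (pe (W s) y₀ h₀) (pe (W s) (y i) (h i))| * |dotF h₀ (h i)|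
              ≤ |c i| * (enormV (pe (W s) y₀ h₀) * enormV (pe (W s) (y i) (h i)))
                * (enormF h₀ * enormF (h i)) :=
                mul_le_mul (mul_le_mul_of_nonneg_left h1 hc) h2 (abs_nonneg _) (by positivity)
            _ = |c i| * enormV (pe (W s) y₀ h₀) * enormV (pe (W s) (y i) (h i))
                * enormF h₀ * enormF (h i) := by ring
  · rw [hDval]
    have key : ∀ i : I, |c i * dotV (pe (W s) y₀ h₀) (pe (W s) (y i) (h i)) * dotF h₀ (h i)|
        ≤ 2 * (1 - pol (W s) h₀ y₀) * enormF h₀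
            * (|c i| * (1 - pol (W s) (h i) (y i)) * enormF (h i)) := by
      intro i
      rw [abs_mul, abs_mul]
      have h1 := abs_dotV_le (pe (W s) y₀ h₀) (pe (W s) (y i) (h i))
      have h2 := abs_dotF_le h₀ (h i)
      have e1 := enormV_pe_le (W s) y₀ h₀
      have e2 := enormV_pe_le (W s) (y i) (h i)
      have s2 : Real.sqrt 2 * Real.sqrt 2 = 2 := Real.mul_self_sqrt (by norm_num)
      have hc := abs_nonneg (c i)
      have := abs_nonneg (dotV (pe (W s) y₀ h₀) (pe (W s) (y i) (h i)))
      have := abs_nonneg (dotF h₀ (h i))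
      have n1 := enormV_nonneg (pe (W s) y₀ h₀)
      have n2 := enormV_nonneg (pe (W s) (y i) (h i))
      have n3 := enormF_nonneg h₀
      have n4 := enormF_nonneg (h i)
      have p1 : (0:ℝ) ≤ 1 - pol (W s) h₀ y₀ := by linarith [pol_le_one (W s) h₀ y₀]
      have p2 : (0:ℝ) ≤ 1 - pol (W s) (h i) (y i) := by linarith [pol_le_one (W s) (h i) (y i)]
      have sq2 : (0:ℝ) ≤ Real.sqrt 2 := Real.sqrt_nonneg _
      calc |c i| * |dotV (pe (W s) y₀ h₀) (pe (W s) (y i) (h i))| * |dotF h₀ (h i)|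
          ≤ |c i| * (enormV (pe (W s) y₀ h₀) * enormV (pe (W s) (y i) (h i)))
            * (enormF h₀ * enormF (h i)) :=
            mul_le_mul (mul_le_mul_of_nonneg_left h1 hc) h2 (abs_nonneg _) (by positivity)
        _ ≤ |c i| * ((Real.sqrt 2 * (1 - pol (W s) h₀ y₀))
              * (Real.sqrt 2 * (1 - pol (W s) (h i) (y i)))) * (enormF h₀ * enormF (h i)) := by
            refine mul_le_mul_of_nonneg_right (mul_le_mul_of_nonneg_left ?_ hc) (by positivity)
            exact mul_le_mul e1 e2 n2 (mul_nonneg sq2 p1)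
        _ = 2 * (1 - pol (W s) h₀ y₀) * enormF h₀
            * (|c i| * (1 - pol (W s) (h i) (y i)) * enormF (h i)) := by
            rw [show Real.sqrt 2 * (1 - pol (W s) h₀ y₀)
              * (Real.sqrt 2 * (1 - pol (W s) (h i) (y i)))
              = (Real.sqrt 2 * Real.sqrt 2) * ((1 - pol (W s) h₀ y₀)
                * (1 - pol (W s) (h i) (y i))) by ring, s2]
            ring
    calc |∑ i, c i * dotV (pe (W s) y₀ h₀) (pe (W s) (y i) (h i)) * dotF h₀ (h i)|
        ≤ ∑ i, |c i * dotV (pe (W s) y₀ h₀) (pe (W s) (y i) (h i)) * dotF h₀ (h i)| :=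
          Finset.abs_sum_le_sum_abs _ _
      _ ≤ ∑ i, 2 * (1 - pol (W s) h₀ y₀) * enormF h₀
            * (|c i| * (1 - pol (W s) (h i) (y i)) * enormF (h i)) :=
          Finset.sum_le_sum fun i _ => key i
      _ = 2 * (1 - pol (W s) h₀ y₀) * enormF h₀
            * ∑ i, |c i| * (1 - pol (W s) (h i) (y i)) * enormF (h i) := by
          rw [Finset.mul_sum]
end

section
/- (Probability-level drift formula.) Suppose W : ℝ → Matrix V (Fin d) ℝ follows the gradient flow associated with training examples (y_i, h_i)_{i ∈ I} and coefficients (c_i)_{i ∈ I}. Then for every target token y ∈ V, feature vector h : Fin d → ℝ, and time s, the function s ↦ π_{W(s)}(y ∣ h) is differentiable at s with derivative π_{W(s)}(y ∣ h) · ∑_{i ∈ I} c_i ⟨δ_{W(s)}(y, h), δ_{W(s)}(y_i, h_i)⟩ ⟨h, h_i⟩; since π_{W(s)}(y ∣ h) > 0, the probability of the token is strictly decreasing at s exactly when this weighted similarity sum is negative. -/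
open scoped BigOperators

/-- Probability-level drift formula: along the gradient flow, `s ↦ π_{W(s)}(y₀ ∣ h₀)` is
differentiable with derivative `π_{W(s)}(y₀∣h₀) · ∑_i c_i ⟨δ(y₀,h₀), δ(y_i,h_i)⟩ ⟨h₀, h_i⟩`;
since `π_{W(s)}(y₀∣h₀) > 0`, the probability is strictly decreasing at `s` exactly when this
weighted similarity sum is negative. -/
theorem probability_drift {V I : Type*} [Fintype V] [DecidableEq V] [Nonempty V] [Fintype I]
    {d : ℕ} (W : ℝ → V → Fin d → ℝ) (y : I → V) (h : I → Fin d → ℝ) (c : I → ℝ)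
    (hflow : ∀ s : ℝ, HasDerivAt W (∑ i, c i • outer (pe (W s) (y i) (h i)) (h i)) s)
    (y₀ : V) (h₀ : Fin d → ℝ) (s : ℝ) :
    HasDerivAt (fun s => pol (W s) h₀ y₀)
      (pol (W s) h₀ y₀
        * ∑ i, c i * dotV (pe (W s) y₀ h₀) (pe (W s) (y i) (h i)) * dotF h₀ (h i)) s ∧
    0 < pol (W s) h₀ y₀ ∧
    (pol (W s) h₀ y₀
        * ∑ i, c i * dotV (pe (W s) y₀ h₀) (pe (W s) (y i) (h i)) * dotF h₀ (h i) < 0 ↔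
      ∑ i, c i * dotV (pe (W s) y₀ h₀) (pe (W s) (y i) (h i)) * dotF h₀ (h i) < 0) := by
  classical
  set M : V → Fin d → ℝ := ∑ i, c i • outer (pe (W s) (y i) (h i)) (h i) with hM
  have hMvj : ∀ v j, M v j = ∑ i, c i * (pe (W s) (y i) (h i) v * h i j) := by
    intro v j
    simp [hM, outer, Finset.sum_apply, mul_assoc]
  -- component derivatives
  have hcomp : ∀ v j, HasDerivAt (fun t => W t v j) (M v j) s := fun v j =>
    hasDerivAt_pi.mp (hasDerivAt_pi.mp (hflow s) v) j
  set zd : V → ℝ := fun v => ∑ j, M v j * h₀ j with hzd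
  have Hz : ∀ v, HasDerivAt (fun t => ∑ j, W t v j * h₀ j) (zd v) s := by
    intro v
    exact HasDerivAt.fun_sum fun j _ => (hcomp v j).mul_const _
  set E : V → ℝ := fun v => Real.exp (∑ j, W s v j * h₀ j) with hE
  have HE : ∀ v, HasDerivAt (fun t => Real.exp (∑ j, W t v j * h₀ j)) (E v * zd v) s :=
    fun v => (Hz v).exp
  set D : ℝ := ∑ u, E u with hD
  have Dpos : 0 < D := Finset.sum_pos (fun u _ => Real.exp_pos _) Finset.univ_nonempty
  have HD : HasDerivAt (fun t => ∑ u, Real.exp (∑ j, W t u j * h₀ j)) (∑ u, E u * zd u) s :=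
    HasDerivAt.fun_sum fun u _ => HE u
  have hdiv := (HE y₀).div HD (ne_of_gt Dpos)
  set T : ℝ := ∑ i, c i * dotV (pe (W s) y₀ h₀) (pe (W s) (y i) (h i)) * dotF h₀ (h i) with hT
  have polpos : 0 < pol (W s) h₀ y₀ := div_pos (Real.exp_pos _) Dpos
  refine ⟨?_, polpos, ?_⟩
  · have key : T = ∑ v, pe (W s) y₀ h₀ v * zd v := by
      have expand : ∀ v, zd v = ∑ i, c i * pe (W s) (y i) (h i) v * dotF h₀ (h i) := by
        intro v
        simp only [hzd, hMvj, dotF, Finset.mul_sum, Finset.sum_mul]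
        rw [Finset.sum_comm]
        exact Finset.sum_congr rfl fun i _ => Finset.sum_congr rfl fun j _ => by ring
      simp only [expand, hT, dotV, Finset.mul_sum, Finset.sum_mul]
      rw [Finset.sum_comm]
      exact Finset.sum_congr rfl fun v _ => Finset.sum_congr rfl fun i _ => by ring
    have key2 : ∑ v, pe (W s) y₀ h₀ v * zd v = zd y₀ - (∑ u, E u * zd u) / D := by
      simp only [pe, pol, sub_mul, Finset.sum_sub_distrib, ite_mul, one_mul, zero_mul]
      rw [Finset.sum_ite_eq' Finset.univ y₀ zd]
      simp only [Finset.mem_univ, if_true]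
      congr 1
      rw [Finset.sum_div]
      exact Finset.sum_congr rfl fun u _ => by rw [hD, hE]; field_simp
    have hval : pol (W s) h₀ y₀ * T
        = ((E y₀ * zd y₀) * D - E y₀ * (∑ u, E u * zd u)) / D ^ 2 := by
      rw [key, key2]
      simp only [pol, hE, hD]
      field_simp
    rw [hval]
    exact hdiv
  · constructor
    · intro H
      nlinarith
    · intro H
      exact mul_neg_of_pos_of_neg polpos H
end
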